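/- Let T : E → E be a bounded A-linear operator that is self-adjoint (⟨T f, g⟩ = ⟨f, T g⟩ for all f, g ∈ E) and bounded below by ρ > 0 (‖T f‖ ≥ ρ‖f‖ for all f), let ξ be a real number and η ≥ 0, and assume ‖T f‖·‖f‖ ≤ √(1+η²)·‖⟨T f, f⟩‖ for every f ∈ E. Let {f_k}_{k∈ℕ} be a sequence in E with ∑_k ⟨f,f_k⟩·f_k = T f + ξ·f for every f ∈ E, and suppose √(ρ²/(1+η²)) − |ξ| > 0. Then the lower norm-frame inequality holds: ‖∑_k ⟨f,f_k⟩⟨f_k,f⟩‖ ≥ (√(ρ²/(1+η²)) − |ξ|)·‖⟨f,f⟩‖ for every f ∈ E. -/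

import Mathlib

/-!
Pairing the identity `∑ₖ fₖ ⟨fₖ, g⟩ = T g + ξ g` with `g` (legitimate because `⟨g, ·⟩` is continuous
by the Cauchy–Schwarz inequality for Hilbert C⋆-modules) turns the frame sum into
`⟨g, T g⟩ + ξ ⟨g, g⟩`. Bounded below and the angle condition give
`ρ ‖g‖² ≤ ‖T g‖ ‖g‖ ≤ √(1 + η²) ‖⟨g, T g⟩‖`, and the reverse triangle inequality finishes.
-/

open scoped RightActions

/-- The class `CStarModule` as it stood in Mathlib (December 2024): a right `A`-module
(via `Aᵐᵒᵖ`) with an `A`-valued inner product, `A`-linear on the right in the second argument. -/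
class CStarModuleRight (A E : Type*) [NonUnitalSemiring A] [StarRing A] [Module ℂ A]
    [AddCommGroup E] [Module ℂ E] [PartialOrder A] [SMul Aᵐᵒᵖ E] [Norm A] [Norm E]
    extends Inner A E where
  inner_add_right {x} {y} {z} : inner x (y + z) = inner x y + inner x z
  inner_self_nonneg {x} : 0 ≤ inner x x
  inner_self {x} : inner x x = 0 ↔ x = 0
  inner_op_smul_right {a : A} {x y : E} : inner x (y <• a) = inner x y * a
  inner_smul_right_complex {z : ℂ} {x} {y} : inner x (z • y) = z • inner x y
  star_inner x y : star (inner x y) = inner y x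
  norm_eq_sqrt_norm_inner_self x : ‖x‖ = Real.sqrt ‖inner x x‖

namespace CStarModuleRight

section Algebra

variable {A E : Type*} [NonUnitalRing A] [StarRing A] [Module ℂ A] [PartialOrder A] [Norm A]
  [AddCommGroup E] [Module ℂ E] [SMul Aᵐᵒᵖ E] [Norm E] [CStarModuleRight A E]

lemma inner_add_left {x y z : E} : inner A (x + y) z = inner A x z + inner A y z := by
  rw [← star_inner z, inner_add_right, star_add, star_inner, star_inner]

lemma inner_sub_right {x y z : E} : inner A x (y - z) = inner A x y - inner A x z :=
  (AddMonoidHom.mk' (inner A x) fun _ _ => inner_add_right).map_sub y z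

lemma inner_sub_left {x y z : E} : inner A (x - y) z = inner A x z - inner A y z :=
  (AddMonoidHom.mk' (fun x : E => inner A x z) fun _ _ => inner_add_left).map_sub x y

lemma inner_zero_right {x : E} : inner A x (0 : E) = 0 :=
  (AddMonoidHom.mk' (inner A x) fun _ _ => inner_add_right).map_zero

lemma inner_zero_left {x : E} : inner A (0 : E) x = 0 := by
  rw [← star_inner x, inner_zero_right, star_zero]

lemma inner_op_smul_left {a : A} {x y : E} : inner A (x <• a) y = star a * inner A x y := by
  rw [← star_inner y, inner_op_smul_right, star_mul, star_inner]

end Algebra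

section Normed

variable {A E : Type*} [CStarAlgebra A] [PartialOrder A]
  [NormedAddCommGroup E] [Module ℂ E] [SMul Aᵐᵒᵖ E] [CStarModuleRight A E]

lemma inner_smul_right_real {r : ℝ} {x y : E} : inner A x (r • y) = r • inner A x y := by
  rw [← Complex.coe_smul, inner_smul_right_complex, Complex.coe_smul]

lemma inner_smul_left_real {r : ℝ} {x y : E} : inner A (r • x) y = r • inner A x y := by
  rw [← star_inner y, inner_smul_right_real, star_smul, star_inner, star_trivial]

lemma norm_inner_self (x : E) : ‖(inner A x x : A)‖ = ‖x‖ ^ 2 := by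
  rw [norm_eq_sqrt_norm_inner_self (A := A) x, Real.sq_sqrt (norm_nonneg _)]

lemma div_mul_norm_inner_self_le_norm_inner {x y : E} {ρ c : ℝ} (hc : 0 < c)
    (hρ : ρ * ‖x‖ ≤ ‖y‖) (hangle : ‖y‖ * ‖x‖ ≤ c * ‖(inner A x y : A)‖) :
    ρ / c * ‖(inner A x x : A)‖ ≤ ‖(inner A x y : A)‖ := by
  rw [norm_inner_self, div_mul_eq_mul_div, div_le_iff₀' hc]
  calc ρ * ‖x‖ ^ 2 = ρ * ‖x‖ * ‖x‖ := by ring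
    _ ≤ ‖y‖ * ‖x‖ := by gcongr
    _ ≤ c * ‖(inner A x y : A)‖ := hangle

end Normed

section CauchySchwarz

variable {A E : Type*} [CStarAlgebra A] [PartialOrder A] [StarOrderedRing A]
  [NormedAddCommGroup E] [Module ℂ E] [SMul Aᵐᵒᵖ E] [CStarModuleRight A E]

lemma inner_mul_inner_swap_le {x y : E} :
    inner A y x * inner A x y ≤ ‖x‖ ^ 2 • (inner A y y : A) := by
  rcases eq_or_ne x 0 with rfl | hx
  · simp [inner_zero_left, inner_zero_right]
  set a : A := inner A x y with ha
  have ha' : inner A y x = star a := by rw [ha, star_inner]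
  set c : ℝ := ‖x‖ ^ 2
  -- expand `0 ≤ ⟪x a - c y, x a - c y⟫` and bound `a* ⟪x, x⟫ a ≤ c a* a`
  have key : (0 : A) ≤ c • (c • inner A y y) - c • (star a * a) :=
    calc (0 : A) ≤ inner A (x <• a - c • y) (x <• a - c • y) := inner_self_nonneg
      _ = star a * inner A x x * a - c • (star a * a) - c • (star a * a)
            + c • (c • inner A y y) := by
        simp only [inner_sub_right, inner_sub_left, inner_op_smul_right, inner_op_smul_left,
          inner_smul_right_real, inner_smul_left_real, ← ha, ha', sub_mul, smul_sub,
          smul_mul_assoc, mul_assoc]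
        abel
      _ ≤ c • (star a * a) - c • (star a * a) - c • (star a * a) + c • (c • inner A y y) := by
        gcongr
        refine (CStarAlgebra.star_left_conjugate_le_norm_smul
          (IsSelfAdjoint.of_nonneg inner_self_nonneg)).trans_eq ?_
        rw [norm_inner_self]
      _ = c • (c • inner A y y) - c • (star a * a) := by abel
  rw [ha', ← smul_le_smul_iff_of_pos_left (by positivity : 0 < c)]
  exact sub_nonneg.mp key

lemma norm_inner_le {x y : E} : ‖(inner A x y : A)‖ ≤ ‖x‖ * ‖y‖ := by
  refine le_of_pow_le_pow_left₀ two_ne_zero (by positivity) ?_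
  calc ‖(inner A x y : A)‖ ^ 2 = ‖inner A y x * inner A x y‖ := by
        rw [← star_inner x y, CStarRing.norm_star_mul_self, pow_two]
    _ ≤ ‖‖x‖ ^ 2 • (inner A y y : A)‖ := by
        refine CStarAlgebra.norm_le_norm_of_nonneg_of_le ?_ inner_mul_inner_swap_le
        rw [← star_inner x y]
        exact star_mul_self_nonneg _
    _ = (‖x‖ * ‖y‖) ^ 2 := by
        rw [norm_smul, norm_inner_self, Real.norm_of_nonneg (by positivity), mul_pow]

lemma continuous_inner_right (g : E) : Continuous (inner A g : E → A) := by
  refine (LipschitzWith.of_dist_le_mul (K := ‖g‖₊) fun x y => ?_).continuous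
  rw [dist_eq_norm, dist_eq_norm, ← inner_sub_right]
  exact norm_inner_le

lemma hasSum_inner_mul_inner {ι : Type*} {f : ι → E} {g y : E}
    (h : HasSum (fun k => f k <• (inner A (f k) g : A)) y) :
    HasSum (fun k => (inner A g (f k) : A) * inner A (f k) g) (inner A g y) := by
  simpa only [Function.comp_def, AddMonoidHom.mk'_apply, inner_op_smul_right] using
    h.map (AddMonoidHom.mk' (inner A g) fun _ _ => inner_add_right) (continuous_inner_right g)

end CauchySchwarz

end CStarModuleRight

theorem lower_frame_inequality_of_bounded_below_general
    {A E : Type*} [CStarAlgebra A] [PartialOrder A] [StarOrderedRing A]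
    [NormedAddCommGroup E] [Module ℂ E] [SMul Aᵐᵒᵖ E] [CStarModuleRight A E]
    (T : E →L[ℂ] E)
    -- `T` is bounded below by `ρ > 0`:
    (ρ : ℝ) (hρ : 0 < ρ) (hTbelow : ∀ x : E, ρ * ‖x‖ ≤ ‖T x‖)
    (ξ η : ℝ)
    -- the angle-type hypothesis `‖T f‖‖f‖ ≤ √(1 + η²) ‖⟨T f, f⟩‖`:
    (hangle : ∀ x : E, ‖T x‖ * ‖x‖ ≤ Real.sqrt (1 + η ^ 2) * ‖(inner A x (T x) : A)‖)
    (f : ℕ → E)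
    -- `∑ₖ ⟨g, f k⟩ · f k = T g + ξ • g` for every `g`:
    (hsum : ∀ g : E, HasSum (fun k => (f k) <• (inner A (f k) g : A)) (T g + ξ • g)) :
    ∀ g : E,
      (Real.sqrt (ρ ^ 2 / (1 + η ^ 2)) - |ξ|) * ‖(inner A g g : A)‖ ≤
        ‖∑' k, (inner A g (f k) : A) * inner A (f k) g‖ := by
  intro g
  have hc : 0 < √(1 + η ^ 2) := by positivity
  have hsqrt : √(ρ ^ 2 / (1 + η ^ 2)) = ρ / √(1 + η ^ 2) := by
    rw [Real.sqrt_div (sq_nonneg ρ), Real.sqrt_sq hρ.le]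
  rw [(CStarModuleRight.hasSum_inner_mul_inner (hsum g)).tsum_eq,
    CStarModuleRight.inner_add_right, CStarModuleRight.inner_smul_right_real, hsqrt]
  calc (ρ / √(1 + η ^ 2) - |ξ|) * ‖(inner A g g : A)‖
      = ρ / √(1 + η ^ 2) * ‖(inner A g g : A)‖ - ‖ξ • (inner A g g : A)‖ := by
        rw [norm_smul, Real.norm_eq_abs]
        ring
    _ ≤ ‖(inner A g (T g) : A)‖ - ‖ξ • (inner A g g : A)‖ := by
        gcongr
        exact CStarModuleRight.div_mul_norm_inner_self_le_norm_inner hc (hTbelow g) (hangle g)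
    _ ≤ ‖(inner A g (T g) : A) + ξ • (inner A g g : A)‖ := norm_sub_le_norm_add _ _

/-- Let `T : E → E` be a bounded `A`-linear operator on a Hilbert C⋆-module `E` over a
unital C⋆-algebra `A`, self-adjoint and bounded below by `ρ > 0`, let `ξ` be a real
number and `η ≥ 0`, and assume `‖T f‖ * ‖f‖ ≤ √(1 + η²) * ‖⟨T f, f⟩‖` for every `f`.
Let `{f k}` be a sequence in `E` with `∑ₖ ⟨f, f k⟩ · f k = T f + ξ • f` for every `f`,
and suppose `√(ρ² / (1 + η²)) − |ξ| > 0`.  Then the lower norm-frame inequality holds: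
`‖∑ₖ ⟨f, f k⟩⟨f k, f⟩‖ ≥ (√(ρ² / (1 + η²)) − |ξ|) * ‖⟨f, f⟩‖` for every `f`. -/
theorem lower_frame_inequality_of_bounded_below
    {A E : Type*} [CStarAlgebra A] [PartialOrder A] [StarOrderedRing A]
    [NormedAddCommGroup E] [Module ℂ E] [SMul Aᵐᵒᵖ E] [CStarModuleRight A E]
    -- `T` is a bounded `A`-linear operator:
    (T : E →L[ℂ] E) (hTA : ∀ (a : A) (x : E), T (x <• a) = (T x) <• a)
    -- `T` is self-adjoint:
    (hTsa : ∀ x y : E, (inner A (T x) y : A) = inner A x (T y))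
    -- `T` is bounded below by `ρ > 0`:
    (ρ : ℝ) (hρ : 0 < ρ) (hTbelow : ∀ x : E, ρ * ‖x‖ ≤ ‖T x‖)
    (ξ η : ℝ) (hη : 0 ≤ η)
    -- the angle-type hypothesis `‖T f‖‖f‖ ≤ √(1 + η²) ‖⟨T f, f⟩‖`:
    (hangle : ∀ x : E, ‖T x‖ * ‖x‖ ≤ Real.sqrt (1 + η ^ 2) * ‖(inner A x (T x) : A)‖)
    (f : ℕ → E)
    -- `∑ₖ ⟨g, f k⟩ · f k = T g + ξ • g` for every `g`:
    (hsum : ∀ g : E, HasSum (fun k => (f k) <• (inner A (f k) g : A)) (T g + ξ • g))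
    (hpos : 0 < Real.sqrt (ρ ^ 2 / (1 + η ^ 2)) - |ξ|) :
    ∀ g : E,
      (Real.sqrt (ρ ^ 2 / (1 + η ^ 2)) - |ξ|) * ‖(inner A g g : A)‖ ≤
        ‖∑' k, (inner A g (f k) : A) * inner A (f k) g‖ :=
  lower_frame_inequality_of_bounded_below_general T ρ hρ hTbelow ξ η hangle f hsum
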